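/- Let (C(G), w) be a polymer model with q spins on an n-vertex graph G of maximum degree at most Δ ≥ 3, satisfying the polymer sampling condition w_γ ≤ e^{−τ|γ|} with constant τ ≥ 5 + 3·log((q−1)Δ). Let ε > 0 and k = 3·log(2n/ε)/(2τ). Then the truncated partition function Z_k(G) = Σ_{Γ∈Ω_k} Π_{γ∈Γ} w_γ satisfies Z_k(G) ≤ Z(G) ≤ e^{ε}·Z_k(G), and the total variation distance between the Gibbs measures μ_G and μ_{G,k} is at most ε. -/

import Mathlib

/-!
Only polymers of size larger than `k` are lost by truncation. For such a polymer,
`w γ ≤ exp (-τ |γ|) ≤ ε / (2n) · exp (-τ |γ| / 3)` by the choice of `k`, and the sum of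
`exp (-τ |γ| / 3)` over all polymers is at most `n`. The latter is a percolation argument: for
Bernoulli(`p`) site percolation, the events "`S` is the open cluster of `v`" are disjoint over
the connected sets `S ∋ v` and have probability `p ^ |S| (1 - p) ^ |∂S| ≥ (p (1 - p) ^ Δ) ^ |S|`,
while a connected set carries at most `(q - 1) ^ |S|` polymers and
`(q - 1) exp (-τ / 3) ≤ p (1 - p) ^ Δ` for `p = 1 / (2Δ)`. Hence
`Z ≤ Z_k ∏_{|γ| > k} (1 + w γ) ≤ e ^ (ε / 2) Z_k`, and the total variation distance is
`1 - Z_k / Z ≤ 1 - e ^ (-ε) ≤ ε`.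
-/

open Finset

attribute [local instance] Classical.propDecidable

/-- A polymer in a subset polymer model: a nonempty connected set of vertices together with
an assignment of non-ground-state spins to its vertices. -/
structure Polymer {V : Type} (G : SimpleGraph V) (q : ℕ) (g : V → Fin q) where
  verts : Finset V
  nonempty : verts.Nonempty
  connected : (G.induce (↑verts : Set V)).Connected
  spin : V → Fin q
  spin_ne : ∀ v ∈ verts, spin v ≠ g v
  spin_ground : ∀ v ∉ verts, spin v = g v

namespace Polymer

variable {V : Type} {G : SimpleGraph V} {q : ℕ} {g : V → Fin q}

/-- The size of a polymer: its number of vertices. -/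
def size (γ : Polymer G q g) : ℕ := γ.verts.card

/-- Two polymers are incompatible if their vertex sets are at graph distance at most 1. -/
def Incompat (γ γ' : Polymer G q g) : Prop :=
  ∃ u ∈ γ.verts, ∃ u' ∈ γ'.verts, u = u' ∨ G.Adj u u'

end Polymer

section PolymerModel

variable {V : Type} [Fintype V] [DecidableEq V] {G : SimpleGraph V} {q : ℕ} {g : V → Fin q}

/-- The state space `Ω`: sets of pairwise compatible allowed polymers. -/
noncomputable def polymerOmega (C : Finset (Polymer G q g)) :
    Finset (Finset (Polymer G q g)) :=
  C.powerset.filter fun Γ => ∀ γ ∈ Γ, ∀ γ' ∈ Γ, γ ≠ γ' → ¬ γ.Incompat γ'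

/-- The weight of a polymer configuration. -/
noncomputable def configWeight (w : Polymer G q g → ℝ) (Γ : Finset (Polymer G q g)) : ℝ :=
  ∏ γ ∈ Γ, w γ

/-- The partition function of the polymer model. -/
noncomputable def polymerZ (C : Finset (Polymer G q g)) (w : Polymer G q g → ℝ) : ℝ :=
  ∑ Γ ∈ polymerOmega C, configWeight w Γ

/-- The Gibbs measure of the polymer model. -/
noncomputable def polymerMu (C : Finset (Polymer G q g)) (w : Polymer G q g → ℝ)
    (Γ : Finset (Polymer G q g)) : ℝ :=
  configWeight w Γ / polymerZ C w

/-- The state space `Ω_k` of the truncated polymer model: configurations all of whose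
polymers have size at most `k`. -/
noncomputable def polymerOmegaTrunc (C : Finset (Polymer G q g)) (k : ℝ) :
    Finset (Finset (Polymer G q g)) :=
  (polymerOmega C).filter fun Γ => ∀ γ ∈ Γ, (γ.size : ℝ) ≤ k

/-- The truncated partition function `Z_k(G)`. -/
noncomputable def polymerZtrunc (C : Finset (Polymer G q g)) (w : Polymer G q g → ℝ)
    (k : ℝ) : ℝ :=
  ∑ Γ ∈ polymerOmegaTrunc C k, configWeight w Γ

/-- The Gibbs measure `μ_{G,k}` of the truncated polymer model, extended by `0` off `Ω_k`. -/
noncomputable def polymerMuTrunc (C : Finset (Polymer G q g)) (w : Polymer G q g → ℝ)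
    (k : ℝ) (Γ : Finset (Polymer G q g)) : ℝ :=
  if Γ ∈ polymerOmegaTrunc C k then configWeight w Γ / polymerZtrunc C w k else 0

section Bernoulli

variable {ι : Type*} [Fintype ι]

def bernoulliWeight (p : ℝ) (ω : ι → Bool) : ℝ := ∏ i, if ω i then p else 1 - p

lemma bernoulliWeight_nonneg {p : ℝ} (hp0 : 0 ≤ p) (hp1 : p ≤ 1) (ω : ι → Bool) :
    0 ≤ bernoulliWeight p ω :=
  prod_nonneg fun i _ => by split <;> linarith

lemma sum_bernoulliWeight [DecidableEq ι] (p : ℝ) : ∑ ω : ι → Bool, bernoulliWeight p ω = 1 := by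
  simpa [bernoulliWeight] using
    (Fintype.prod_sum fun (_ : ι) (b : Bool) => if b then p else 1 - p).symm

lemma sum_bernoulliWeight_cylinder [DecidableEq ι] (p : ℝ) {A B : Finset ι}
    (hAB : Disjoint A B) :
    ∑ ω : ι → Bool, (if ∀ i, (i ∈ A → ω i = true) ∧ (i ∈ B → ω i = false)
      then bernoulliWeight p ω else 0) = p ^ #A * (1 - p) ^ #B := by
  have hfactor : ∀ i, (∑ b : Bool, if (i ∈ A → b = true) ∧ (i ∈ B → b = false)
      then (if b then p else 1 - p) else 0) =
      (if i ∈ A then p else 1) * (if i ∈ B then 1 - p else 1) := by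
    intro i
    by_cases hA : i ∈ A <;> by_cases hB : i ∈ B
    · exact absurd hB (disjoint_left.1 hAB hA)
    all_goals simp [hA, hB]
  simp_rw [bernoulliWeight, ← Fintype.prod_ite_zero]
  rw [← Fintype.prod_sum fun i (b : Bool) => if (i ∈ A → b = true) ∧ (i ∈ B → b = false)
    then (if b then p else 1 - p) else 0]
  simp_rw [hfactor, prod_mul_distrib, Fintype.prod_ite_mem, prod_const]

end Bernoulli

lemma half_sum_abs_div_sub_ite_div_eq {α : Type*} [DecidableEq α] {s t : Finset α}
    (hts : t ⊆ s) {f : α → ℝ} (hf : ∀ x ∈ s, 0 ≤ f x) (ht : 0 < ∑ x ∈ t, f x) :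
    1 / 2 * ∑ x ∈ s, |f x / ∑ y ∈ s, f y - if x ∈ t then f x / ∑ y ∈ t, f y else 0|
      = 1 - (∑ x ∈ t, f x) / ∑ x ∈ s, f x := by
  set Zs := ∑ y ∈ s, f y
  set Zt := ∑ y ∈ t, f y
  have hZ : Zt ≤ Zs := sum_le_sum_of_subset_of_nonneg hts fun x hx _ => hf x hx
  have hZs : 0 < Zs := ht.trans_le hZ
  have hin : ∑ x ∈ t, |f x / Zs - if x ∈ t then f x / Zt else 0| = 1 - Zt / Zs := by
    rw [sum_congr rfl fun x hx => by
      rw [if_pos hx, abs_sub_comm, abs_of_nonneg (sub_nonneg.2 (div_le_div_of_nonneg_left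
        (hf x (hts hx)) ht hZ))]]
    rw [sum_sub_distrib, ← sum_div, ← sum_div, div_self ht.ne']
  have hout : ∑ x ∈ s \ t, |f x / Zs - if x ∈ t then f x / Zt else 0| = 1 - Zt / Zs := by
    rw [sum_congr rfl fun x hx => by
      rw [if_neg (mem_sdiff.1 hx).2, sub_zero, abs_of_nonneg (div_nonneg
        (hf x (mem_sdiff.1 hx).1) hZs.le)]]
    rw [← sum_div, sum_sdiff_eq_sub hts, sub_div, div_self hZs.ne']
  rw [← sum_sdiff hts, hin, hout]
  ring

namespace SimpleGraph

variable {V : Type*} [Fintype V] [DecidableEq V] (G : SimpleGraph V) [DecidableRel G.Adj]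

def vertexBoundary (S : Finset V) : Finset V := S.biUnion (fun u => G.neighborFinset u) \ S

variable {G}

lemma card_vertexBoundary_le {Δ : ℕ} (hdeg : ∀ v, G.degree v ≤ Δ) (S : Finset V) :
    #(G.vertexBoundary S) ≤ Δ * #S :=
  calc #(G.vertexBoundary S) ≤ #(S.biUnion fun u => G.neighborFinset u) :=
        card_le_card sdiff_subset
    _ ≤ ∑ u ∈ S, #(G.neighborFinset u) := card_biUnion_le
    _ ≤ ∑ _u ∈ S, Δ :=
        sum_le_sum fun u _ => (G.card_neighborFinset_eq_degree u).trans_le (hdeg u)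
    _ = Δ * #S := by rw [sum_const, smul_eq_mul, mul_comm]

lemma subset_of_connected_of_vertexBoundary {S S' : Finset V} {v : V} {P : V → Prop}
    (hS : (G.induce (S : Set V)).Connected) (hvS : v ∈ S) (hvS' : v ∈ S')
    (hSP : ∀ x ∈ S, P x) (hS'P : ∀ x ∈ G.vertexBoundary S', ¬ P x) : S ⊆ S' := by
  intro x hxS
  by_contra hxS'
  obtain ⟨walk⟩ := hS.preconnected ⟨v, hvS⟩ ⟨x, hxS⟩
  obtain ⟨d, -, hd₁, hd₂⟩ := walk.exists_boundary_dart {y | (y : V) ∈ S'} hvS' hxS'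
  refine hS'P d.snd ?_ (hSP d.snd d.snd.2)
  exact mem_sdiff.2 ⟨mem_biUnion.2 ⟨d.fst, hd₁, by simpa using d.adj⟩, hd₂⟩

lemma eq_of_connected_of_vertexBoundary {S S' : Finset V} {v : V} {P : V → Prop}
    (hS : (G.induce (S : Set V)).Connected) (hS' : (G.induce (S' : Set V)).Connected)
    (hvS : v ∈ S) (hvS' : v ∈ S') (hSP : ∀ x ∈ S, P x) (hS'P : ∀ x ∈ S', P x)
    (hbS : ∀ x ∈ G.vertexBoundary S, ¬ P x) (hbS' : ∀ x ∈ G.vertexBoundary S', ¬ P x) :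
    S = S' :=
  (subset_of_connected_of_vertexBoundary hS hvS hvS' hSP hbS').antisymm
    (subset_of_connected_of_vertexBoundary hS' hvS' hvS hS'P hbS)

variable (G) in
def connectedSetsContaining (v : V) : Finset (Finset V) :=
  {S | v ∈ S ∧ (G.induce (S : Set V)).Connected}

/-- The events "`S` is the open cluster of `v` in Bernoulli site percolation" are disjoint. -/
lemma sum_connectedSetsContaining_pow_mul_pow_vertexBoundary_le_one (v : V) {p : ℝ}
    (hp0 : 0 ≤ p) (hp1 : p ≤ 1) :
    ∑ S ∈ G.connectedSetsContaining v, p ^ #S * (1 - p) ^ #(G.vertexBoundary S) ≤ 1 := by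
  set F := G.connectedSetsContaining v
  let E : Finset V → (V → Bool) → Prop := fun S ω =>
    ∀ x, (x ∈ S → ω x = true) ∧ (x ∈ G.vertexBoundary S → ω x = false)
  have hcluster : ∀ ω, #{S ∈ F | E S ω} ≤ 1 := by
    refine fun ω => card_le_one.2 fun S hS S' hS' => ?_
    simp only [F, connectedSetsContaining, mem_filter, mem_univ, true_and, E] at hS hS'
    exact eq_of_connected_of_vertexBoundary (P := fun x => ω x = true) hS.1.2 hS'.1.2 hS.1.1
      hS'.1.1 (fun x hx => (hS.2 x).1 hx) (fun x hx => (hS'.2 x).1 hx)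
      (fun x hx => by simp [(hS.2 x).2 hx]) (fun x hx => by simp [(hS'.2 x).2 hx])
  calc ∑ S ∈ F, p ^ #S * (1 - p) ^ #(G.vertexBoundary S)
      = ∑ S ∈ F, ∑ ω, if E S ω then bernoulliWeight p ω else 0 :=
        sum_congr rfl fun S _ => (sum_bernoulliWeight_cylinder p disjoint_sdiff).symm
    _ = ∑ ω, #{S ∈ F | E S ω} * bernoulliWeight p ω := by
        rw [sum_comm]
        exact sum_congr rfl fun ω _ => by rw [← sum_filter, sum_const, nsmul_eq_mul]
    _ ≤ ∑ ω, bernoulliWeight p ω := sum_le_sum fun ω _ =>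
        mul_le_of_le_one_left (bernoulliWeight_nonneg hp0 hp1 ω) (by exact_mod_cast hcluster ω)
    _ = 1 := sum_bernoulliWeight p

lemma sum_connectedSetsContaining_pow_le_one {Δ : ℕ} (hdeg : ∀ v, G.degree v ≤ Δ) (v : V)
    {p x : ℝ} (hp0 : 0 ≤ p) (hp1 : p ≤ 1) (hx0 : 0 ≤ x) (hx : x ≤ p * (1 - p) ^ Δ) :
    ∑ S ∈ G.connectedSetsContaining v, x ^ #S ≤ 1 :=
  calc ∑ S ∈ G.connectedSetsContaining v, x ^ #S
      ≤ ∑ S ∈ G.connectedSetsContaining v, p ^ #S * (1 - p) ^ (Δ * #S) :=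
        sum_le_sum fun S _ => by
          rw [pow_mul, ← mul_pow]
          exact pow_le_pow_left₀ hx0 hx _
    _ ≤ ∑ S ∈ G.connectedSetsContaining v, p ^ #S * (1 - p) ^ #(G.vertexBoundary S) :=
        sum_le_sum fun S _ => mul_le_mul_of_nonneg_left
          (pow_le_pow_of_le_one (by linarith) (by linarith) (card_vertexBoundary_le hdeg S))
          (pow_nonneg hp0 _)
    _ ≤ 1 := sum_connectedSetsContaining_pow_mul_pow_vertexBoundary_le_one v hp0 hp1

end SimpleGraph

namespace Polymer

variable {V : Type} {G : SimpleGraph V} {q : ℕ} {g : V → Fin q}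

lemma ext {γ γ' : Polymer G q g} (hverts : γ.verts = γ'.verts) (hspin : γ.spin = γ'.spin) :
    γ = γ' := by
  cases γ; cases γ'
  cases hverts; cases hspin
  rfl

lemma card_filter_verts_eq_le [Fintype V] [DecidableEq V] (C : Finset (Polymer G q g))
    (S : Finset V) :
    #{γ ∈ C | γ.verts = S} ≤ (q - 1) ^ #S := by
  let spins : Finset (V → Fin q) :=
    Fintype.piFinset fun v => if v ∈ S then univ.erase (g v) else {g v}
  have hspins : #spins = (q - 1) ^ #S := by
    simp [spins, Fintype.card_piFinset, apply_ite card, card_erase_of_mem]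
  rw [← hspins]
  refine card_le_card_of_injOn Polymer.spin (fun γ hγ => ?_) fun γ hγ γ' hγ' hspin => ?_
  · obtain ⟨-, rfl⟩ := mem_filter.1 hγ
    refine Fintype.mem_piFinset.2 fun v => ?_
    split_ifs with hv
    · exact mem_erase.2 ⟨γ.spin_ne v hv, mem_univ _⟩
    · exact mem_singleton.2 (γ.spin_ground v hv)
  · exact Polymer.ext ((mem_filter.1 hγ).2.trans (mem_filter.1 hγ').2.symm) hspin

end Polymer

lemma sum_pow_size_le_card {V : Type} [Fintype V] [DecidableEq V] {G : SimpleGraph V} {q : ℕ}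
    {g : V → Fin q} {Δ : ℕ} (hdeg : ∀ v, G.degree v ≤ Δ) (C : Finset (Polymer G q g))
    {p y : ℝ} (hp0 : 0 ≤ p) (hp1 : p ≤ 1) (hy0 : 0 ≤ y)
    (hy : (q - 1 : ℕ) * y ≤ p * (1 - p) ^ Δ) :
    ∑ γ ∈ C, y ^ γ.size ≤ Fintype.card V := by
  have hvertex : ∀ v, ∑ γ ∈ C with v ∈ γ.verts, y ^ γ.size ≤ 1 := by
    intro v
    have hmaps : ∀ γ ∈ {γ ∈ C | v ∈ γ.verts}, γ.verts ∈ G.connectedSetsContaining v :=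
      fun γ hγ => by
        simp [SimpleGraph.connectedSetsContaining, (mem_filter.1 hγ).2, γ.connected]
    calc ∑ γ ∈ C with v ∈ γ.verts, y ^ γ.size
        = ∑ S ∈ G.connectedSetsContaining v,
            ∑ γ ∈ {γ ∈ C | v ∈ γ.verts} with γ.verts = S, y ^ #S := by
          rw [← sum_fiberwise_of_maps_to hmaps]
          exact sum_congr rfl fun S _ => sum_congr rfl fun γ hγ => by
            rw [Polymer.size, (mem_filter.1 hγ).2]
      _ ≤ ∑ S ∈ G.connectedSetsContaining v, ((q - 1 : ℕ) * y) ^ #S := by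
          refine sum_le_sum fun S _ => ?_
          rw [sum_const, nsmul_eq_mul, mul_pow]
          refine mul_le_mul_of_nonneg_right ?_ (pow_nonneg hy0 _)
          exact_mod_cast Polymer.card_filter_verts_eq_le {γ ∈ C | v ∈ γ.verts} S
      _ ≤ 1 := SimpleGraph.sum_connectedSetsContaining_pow_le_one hdeg v hp0 hp1
          (by positivity) hy
  calc ∑ γ ∈ C, y ^ γ.size ≤ ∑ γ ∈ C, ∑ _v ∈ γ.verts, y ^ γ.size :=
        sum_le_sum fun γ _ => by
          rw [sum_const, nsmul_eq_mul]
          exact le_mul_of_one_le_left (pow_nonneg hy0 _) (by exact_mod_cast γ.nonempty.card_pos)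
    _ = ∑ v, ∑ γ ∈ C with v ∈ γ.verts, y ^ γ.size :=
        sum_comm' fun γ v => by simp [and_comm]
    _ ≤ ∑ _v : V, (1 : ℝ) := sum_le_sum fun v _ => hvertex v
    _ = Fintype.card V := by simp

section PolymerPartitionFunction

variable {V : Type} {G : SimpleGraph V} {q : ℕ} {g : V → Fin q}
  {C : Finset (Polymer G q g)} {w : Polymer G q g → ℝ}

lemma subset_of_mem_polymerOmega {Γ : Finset (Polymer G q g)} (hΓ : Γ ∈ polymerOmega C) :
    Γ ⊆ C :=
  mem_powerset.1 (mem_filter.1 hΓ).1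

lemma configWeight_nonneg (hw : ∀ γ ∈ C, 0 ≤ w γ) {Γ : Finset (Polymer G q g)} (hΓ : Γ ⊆ C) :
    0 ≤ configWeight w Γ :=
  prod_nonneg fun γ hγ => hw γ (hΓ hγ)

lemma one_le_polymerZ (hw : ∀ γ ∈ C, 0 ≤ w γ) : 1 ≤ polymerZ C w := by
  have hempty : ∅ ∈ polymerOmega C := by simp [polymerOmega]
  calc (1 : ℝ) = configWeight w ∅ := prod_empty.symm
    _ ≤ polymerZ C w := single_le_sum (f := configWeight w)
        (fun Γ hΓ => configWeight_nonneg hw (subset_of_mem_polymerOmega hΓ)) hempty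

lemma polymerOmegaTrunc_eq (C : Finset (Polymer G q g)) (k : ℝ) :
    polymerOmegaTrunc C k = polymerOmega {γ ∈ C | (γ.size : ℝ) ≤ k} := by
  ext Γ
  simp only [polymerOmegaTrunc, polymerOmega, mem_filter, mem_powerset, subset_iff]
  grind

lemma polymerZtrunc_eq (C : Finset (Polymer G q g)) (w : Polymer G q g → ℝ) (k : ℝ) :
    polymerZtrunc C w k = polymerZ {γ ∈ C | (γ.size : ℝ) ≤ k} w := by
  rw [polymerZtrunc, polymerOmegaTrunc_eq, polymerZ]

/-- Splitting a configuration into its `P`-part and its `¬P`-part, and forgetting that the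
`¬P`-part must itself be compatible. -/
lemma polymerZ_le_mul_prod_one_add (hw : ∀ γ ∈ C, 0 ≤ w γ) (P : Polymer G q g → Prop)
    [DecidablePred P] :
    polymerZ C w ≤ polymerZ {γ ∈ C | P γ} w * ∏ γ ∈ C with ¬ P γ, (1 + w γ) := by
  let split (Γ : Finset (Polymer G q g)) := (Γ.filter P, Γ.filter fun γ => ¬ P γ)
  have hsplit : Set.InjOn split (polymerOmega C) := fun Γ _ Γ' _ h => by
    rw [← filter_union_filter_not_eq P Γ, ← filter_union_filter_not_eq P Γ']
    exact congrArg₂ (· ∪ ·) (congrArg Prod.fst h) (congrArg Prod.snd h)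
  have hmaps : (polymerOmega C).image split ⊆
      polymerOmega {γ ∈ C | P γ} ×ˢ (C.filter fun γ => ¬ P γ).powerset := by
    intro AB hAB
    obtain ⟨Γ, hΓ, rfl⟩ := mem_image.1 hAB
    simp only [polymerOmega, mem_filter, mem_powerset] at hΓ
    refine mem_product.2 ⟨mem_filter.2 ⟨mem_powerset.2 (filter_subset_filter P hΓ.1),
      fun γ hγ γ' hγ' => hΓ.2 γ (filter_subset _ _ hγ) γ' (filter_subset _ _ hγ')⟩,
      mem_powerset.2 (filter_subset_filter _ hΓ.1)⟩
  calc polymerZ C w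
      = ∑ Γ ∈ polymerOmega C, configWeight w (split Γ).1 * configWeight w (split Γ).2 :=
        sum_congr rfl fun Γ _ => (prod_filter_mul_prod_filter_not Γ P w).symm
    _ = ∑ AB ∈ (polymerOmega C).image split, configWeight w AB.1 * configWeight w AB.2 :=
        (sum_image (f := fun AB => configWeight w AB.1 * configWeight w AB.2) hsplit).symm
    _ ≤ ∑ AB ∈ polymerOmega {γ ∈ C | P γ} ×ˢ (C.filter fun γ => ¬ P γ).powerset,
          configWeight w AB.1 * configWeight w AB.2 := by
        refine sum_le_sum_of_subset_of_nonneg hmaps fun AB hAB _ => ?_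
        obtain ⟨hA, hB⟩ := mem_product.1 hAB
        exact mul_nonneg
          (configWeight_nonneg hw ((subset_of_mem_polymerOmega hA).trans (filter_subset _ _)))
          (configWeight_nonneg hw ((mem_powerset.1 hB).trans (filter_subset _ _)))
    _ = polymerZ {γ ∈ C | P γ} w * ∏ γ ∈ C with ¬ P γ, (1 + w γ) := by
        rw [sum_product, polymerZ, prod_one_add, sum_mul_sum]
        rfl

lemma polymerZtrunc_le_polymerZ (hw : ∀ γ ∈ C, 0 ≤ w γ) (k : ℝ) :
    polymerZtrunc C w k ≤ polymerZ C w :=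
  sum_le_sum_of_subset_of_nonneg (filter_subset _ _) fun _ hΓ _ =>
    configWeight_nonneg hw (subset_of_mem_polymerOmega hΓ)

lemma polymerZ_le_exp_mul_polymerZtrunc (hw : ∀ γ ∈ C, 0 ≤ w γ) {k ε : ℝ}
    (htail : ∑ γ ∈ C with ¬ (γ.size : ℝ) ≤ k, w γ ≤ ε) :
    polymerZ C w ≤ Real.exp ε * polymerZtrunc C w k := by
  have hZk : 0 ≤ polymerZtrunc C w k := by
    rw [polymerZtrunc_eq]
    exact zero_le_one.trans (one_le_polymerZ fun γ hγ => hw γ (mem_filter.1 hγ).1)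
  calc polymerZ C w
      ≤ polymerZtrunc C w k * ∏ γ ∈ C with ¬ (γ.size : ℝ) ≤ k, (1 + w γ) :=
        polymerZtrunc_eq C w k ▸ polymerZ_le_mul_prod_one_add hw _
    _ ≤ polymerZtrunc C w k * Real.exp (∑ γ ∈ C with ¬ (γ.size : ℝ) ≤ k, w γ) := by
        rw [Real.exp_sum]
        refine mul_le_mul_of_nonneg_left (prod_le_prod (fun γ hγ => ?_) fun γ _ => ?_) hZk
        · linarith [hw γ (mem_filter.1 hγ).1]
        · linarith [Real.add_one_le_exp (w γ)]
    _ ≤ Real.exp ε * polymerZtrunc C w k := by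
        rw [mul_comm]
        gcongr

end PolymerPartitionFunction

lemma half_sum_abs_polymerMu_sub_polymerMuTrunc_le {V : Type} {G : SimpleGraph V} {q : ℕ}
    {g : V → Fin q} {C : Finset (Polymer G q g)} {w : Polymer G q g → ℝ}
    (hw : ∀ γ ∈ C, 0 ≤ w γ) {k ε : ℝ} (hZ : polymerZ C w ≤ Real.exp ε * polymerZtrunc C w k) :
    1 / 2 * ∑ Γ ∈ polymerOmega C, |polymerMu C w Γ - polymerMuTrunc C w k Γ| ≤ ε := by
  have hZk : 1 ≤ polymerZtrunc C w k :=
    polymerZtrunc_eq C w k ▸ one_le_polymerZ fun γ hγ => hw γ (mem_filter.1 hγ).1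
  have hZ0 : 0 < polymerZ C w := by linarith [polymerZtrunc_le_polymerZ hw k]
  have hratio : Real.exp (-ε) ≤ polymerZtrunc C w k / polymerZ C w := by
    rw [le_div_iff₀ hZ0, Real.exp_neg, inv_mul_le_iff₀ (Real.exp_pos _)]
    exact hZ
  calc 1 / 2 * ∑ Γ ∈ polymerOmega C, |polymerMu C w Γ - polymerMuTrunc C w k Γ|
      = 1 - polymerZtrunc C w k / polymerZ C w :=
        half_sum_abs_div_sub_ite_div_eq (filter_subset _ _)
          (fun Γ hΓ => configWeight_nonneg hw (subset_of_mem_polymerOmega hΓ))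
          (show 0 < polymerZtrunc C w k by linarith)
    _ ≤ ε := by linarith [Real.add_one_le_exp (-ε)]

section Estimates

open Real

lemma four_le_exp_five_thirds : 4 ≤ exp (5 / 3) := by
  have h₁ := exp_one_gt_d9
  have h₂ := add_one_le_exp (2 / 3 : ℝ)
  calc (4 : ℝ) ≤ 2.7182818283 * (2 / 3 + 1) := by norm_num
    _ ≤ exp 1 * exp (2 / 3) := by gcongr
    _ = exp (5 / 3) := by rw [← exp_add]; norm_num

lemma natCast_pred_mul_exp_neg_div_three_le {q Δ : ℕ} (hq : 2 ≤ q) (hΔ : 1 ≤ Δ) {τ : ℝ}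
    (hτ : 5 + 3 * log (((q : ℝ) - 1) * Δ) ≤ τ) :
    ((q - 1 : ℕ) : ℝ) * exp (-τ / 3) ≤ (2 * Δ : ℝ)⁻¹ * (1 - (2 * Δ : ℝ)⁻¹) ^ Δ := by
  have hq' : (1 : ℝ) ≤ (q : ℝ) - 1 := by
    have : (2 : ℝ) ≤ q := by exact_mod_cast hq
    linarith
  have hΔ' : (1 : ℝ) ≤ Δ := by exact_mod_cast hΔ
  have ha : 0 < ((q : ℝ) - 1) * Δ := by positivity
  have hexp : exp (-τ / 3) ≤ exp (-(5 / 3)) / (((q : ℝ) - 1) * Δ) := by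
    rw [← exp_log ha, ← exp_sub]
    exact exp_le_exp.2 (by linarith)
  have hfive : exp (-(5 / 3)) ≤ 1 / 4 := by
    rw [exp_neg, inv_le_comm₀ (exp_pos _) (by norm_num)]
    simpa using four_le_exp_five_thirds
  have hbernoulli : 1 + Δ * (-(2 * Δ : ℝ)⁻¹) ≤ (1 + -(2 * Δ : ℝ)⁻¹) ^ Δ := by
    refine one_add_mul_le_pow ?_ Δ
    have : (2 * Δ : ℝ)⁻¹ ≤ 1 := inv_le_one_of_one_le₀ (by linarith)
    linarith
  calc ((q - 1 : ℕ) : ℝ) * exp (-τ / 3)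
      ≤ ((q : ℝ) - 1) * (exp (-(5 / 3)) / (((q : ℝ) - 1) * Δ)) := by
        rw [Nat.cast_sub (by omega), Nat.cast_one]
        gcongr
    _ = exp (-(5 / 3)) / Δ := by field_simp
    _ ≤ 1 / 4 / Δ := by gcongr
    _ = (2 * Δ : ℝ)⁻¹ * (1 + Δ * (-(2 * Δ : ℝ)⁻¹)) := by field_simp; ring
    _ ≤ (2 * Δ : ℝ)⁻¹ * (1 - (2 * Δ : ℝ)⁻¹) ^ Δ := by
        rw [← sub_eq_add_neg] at hbernoulli
        gcongr

lemma sum_weight_filter_not_size_le_le {V : Type} [Fintype V] [DecidableEq V]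
    {G : SimpleGraph V} {q : ℕ} {g : V → Fin q} (C : Finset (Polymer G q g))
    (w : Polymer G q g → ℝ) {τ : ℝ} (hτ : 0 < τ) (hsamp : ∀ γ ∈ C, w γ ≤ exp (-τ * γ.size))
    (hsum : ∑ γ ∈ C, exp (-τ / 3) ^ γ.size ≤ Fintype.card V) {ε : ℝ} (hε : 0 < ε) {k : ℝ}
    (hk : k = 3 * log (2 * (Fintype.card V : ℝ) / ε) / (2 * τ)) :
    ∑ γ ∈ C with ¬ (γ.size : ℝ) ≤ k, w γ ≤ ε / 2 := by
  set n : ℝ := (Fintype.card V : ℝ)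
  have hpoint : ∀ γ ∈ C.filter fun γ => ¬ (γ.size : ℝ) ≤ k,
      w γ ≤ ε / (2 * n) * exp (-τ / 3) ^ γ.size := by
    intro γ hγ
    obtain ⟨hγC, hγk⟩ := mem_filter.1 hγ
    have hn : 0 < n := by
      obtain ⟨v, -⟩ := γ.nonempty
      exact Nat.cast_pos.2 (Fintype.card_pos_iff.2 ⟨v⟩)
    have hlarge : exp (-(2 * τ / 3) * γ.size) ≤ ε / (2 * n) :=
      calc exp (-(2 * τ / 3) * γ.size) ≤ exp (-(2 * τ / 3) * k) :=
            exp_le_exp.2 (by nlinarith [not_le.1 hγk])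
        _ = ε / (2 * n) := by
            rw [show -(2 * τ / 3) * k = -log (2 * n / ε) by rw [hk]; field_simp,
              exp_neg, exp_log (by positivity), inv_div]
    calc w γ ≤ exp (-τ * γ.size) := hsamp γ hγC
      _ = exp (-(2 * τ / 3) * γ.size) * exp (-τ / 3) ^ γ.size := by
          rw [← exp_nat_mul, ← exp_add]
          ring_nf
      _ ≤ ε / (2 * n) * exp (-τ / 3) ^ γ.size := by gcongr
  calc ∑ γ ∈ C with ¬ (γ.size : ℝ) ≤ k, w γ
      ≤ ∑ γ ∈ C with ¬ (γ.size : ℝ) ≤ k, ε / (2 * n) * exp (-τ / 3) ^ γ.size :=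
        sum_le_sum hpoint
    _ ≤ ε / (2 * n) * ∑ γ ∈ C, exp (-τ / 3) ^ γ.size := by
        rw [← mul_sum]
        exact mul_le_mul_of_nonneg_left (sum_le_sum_of_subset_of_nonneg (filter_subset _ _)
          fun γ _ _ => by positivity) (by positivity)
    _ ≤ ε / (2 * n) * n := by gcongr
    _ ≤ ε / 2 := by
        rcases eq_or_ne n 0 with hn | hn
        · simp only [hn, mul_zero, div_zero]
          positivity
        · rw [div_mul_eq_mul_div, mul_div_mul_right _ _ hn]

end Estimates

theorem stmt_12_general {V : Type} [Fintype V] [DecidableEq V] (G : SimpleGraph V) (q Δ : ℕ)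
    (hq : 2 ≤ q) (hΔ : 3 ≤ Δ) (hdeg : ∀ v : V, G.degree v ≤ Δ)
    (g : V → Fin q) (C : Finset (Polymer G q g)) (w : Polymer G q g → ℝ)
    (hw : ∀ γ ∈ C, 0 ≤ w γ) (τ : ℝ)
    (hτ : 5 + 3 * Real.log (((q : ℝ) - 1) * Δ) ≤ τ)
    (hsamp : ∀ γ ∈ C, w γ ≤ Real.exp (-τ * γ.size))
    (ε : ℝ) (hε : 0 < ε) (k : ℝ)
    (hk : k = 3 * Real.log (2 * (Fintype.card V : ℝ) / ε) / (2 * τ)) :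
    polymerZtrunc C w k ≤ polymerZ C w
    ∧ polymerZ C w ≤ Real.exp ε * polymerZtrunc C w k
    ∧ (1 / 2) * ∑ Γ ∈ polymerOmega C, |polymerMu C w Γ - polymerMuTrunc C w k Γ| ≤ ε := by
  have hτ0 : 0 < τ := by
    have hq' : (2 : ℝ) ≤ q := by exact_mod_cast hq
    have hΔ' : (3 : ℝ) ≤ Δ := by exact_mod_cast hΔ
    linarith [Real.log_nonneg (show (1 : ℝ) ≤ ((q : ℝ) - 1) * Δ by nlinarith)]
  have htail : ∑ γ ∈ C with ¬ (γ.size : ℝ) ≤ k, w γ ≤ ε / 2 :=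
    sum_weight_filter_not_size_le_le C w hτ0 hsamp (sum_pow_size_le_card hdeg C
      (by positivity) (inv_le_one_of_one_le₀ (by norm_cast; omega)) (Real.exp_pos _).le
      (natCast_pred_mul_exp_neg_div_three_le hq (by omega) hτ)) hε hk
  have hZ := polymerZ_le_exp_mul_polymerZtrunc (ε := ε) hw (htail.trans (by linarith))
  exact ⟨polymerZtrunc_le_polymerZ hw k, hZ, half_sum_abs_polymerMu_sub_polymerMuTrunc_le hw hZ⟩

/-- under the polymer sampling condition with constant
`τ ≥ 5 + 3 log((q-1)Δ)`, for `k = 3 log(2n/ε)/(2τ)` the truncated partition function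
satisfies `Z_k(G) ≤ Z(G) ≤ e^ε Z_k(G)` and the total variation distance between the Gibbs
measures `μ_G` and `μ_{G,k}` is at most `ε`. -/
theorem stmt_12 {V : Type} [Fintype V] [DecidableEq V] (G : SimpleGraph V) (q Δ : ℕ)
    (hq : 2 ≤ q) (hΔ : 3 ≤ Δ) (hdeg : ∀ v : V, G.degree v ≤ Δ)
    (g : V → Fin q) (C : Finset (Polymer G q g)) (w : Polymer G q g → ℝ)
    (hw : ∀ γ ∈ C, 0 ≤ w γ) (τ : ℝ)
    (hτ : 5 + 3 * Real.log (((q : ℝ) - 1) * Δ) ≤ τ)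
    (hsamp : ∀ γ ∈ C, w γ ≤ Real.exp (-τ * γ.size))
    (hn : 0 < Fintype.card V) (ε : ℝ) (hε : 0 < ε) (k : ℝ)
    (hk : k = 3 * Real.log (2 * (Fintype.card V : ℝ) / ε) / (2 * τ)) :
    polymerZtrunc C w k ≤ polymerZ C w
    ∧ polymerZ C w ≤ Real.exp ε * polymerZtrunc C w k
    ∧ (1 / 2) * ∑ Γ ∈ polymerOmega C, |polymerMu C w Γ - polymerMuTrunc C w k Γ| ≤ ε :=
  stmt_12_general G q Δ hq hΔ hdeg g C w hw τ hτ hsamp ε hε k hk
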